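/- Let 𝒜 and ℬ be sets of pointed Kripke models and m, k ∈ ℕ. If there are m-bisimilar pointed models (A, w) ∈ 𝒜 and (B, v) ∈ ℬ, then player D has a winning strategy in the formula size game FS_{m,k}(𝒜, ℬ). -/
import Mathlib


universe u v

/-- A Kripke model for a set `Φ` of proposition symbols: a set of worlds `W`,
an accessibility relation `R` and a valuation `V`. -/
structure KripkeModel (Φ : Type) : Type (u + 1) where
  W : Type u
  R : W → W → Prop
  V : Φ → W → Prop

/-- A pointed Kripke model: a Kripke model together with a distinguished world. -/
structure PointedModel (Φ : Type) : Type (u + 1) where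
  M : KripkeModel.{u} Φ
  w : M.W

/-- Formulas of basic modal logic in negation normal form:
`φ ::= p | ¬p | (φ ∧ φ) | (φ ∨ φ) | ◇φ | □φ`. -/
inductive MLFormula (Φ : Type) : Type where
  | pos (p : Φ)
  | neg (p : Φ)
  | and (φ ψ : MLFormula Φ)
  | or (φ ψ : MLFormula Φ)
  | dia (φ : MLFormula Φ)
  | box (φ : MLFormula Φ)

/-- Standard Kripke semantics for basic modal logic. -/
def MLSat {Φ : Type} (M : KripkeModel.{u} Φ) : M.W → MLFormula Φ → Prop
  | w, .pos p => M.V p w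
  | w, .neg p => ¬ M.V p w
  | w, .and φ ψ => MLSat M w φ ∧ MLSat M w ψ
  | w, .or φ ψ => MLSat M w φ ∨ MLSat M w ψ
  | w, .dia φ => ∃ x, M.R w x ∧ MLSat M x φ
  | w, .box φ => ∀ x, M.R w x → MLSat M x φ

/-- Literals are the formulas `p` and `¬p`. -/
def IsLiteral {Φ : Type} : MLFormula Φ → Prop
  | .pos _ => True
  | .neg _ => True
  | _ => False

/-- The modal size `ms(φ)`: the number of modal operators `◇`, `□` in `φ`. -/
def msize {Φ : Type} : MLFormula Φ → ℕ
  | .pos _ => 0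
  | .neg _ => 0
  | .and φ ψ => msize φ + msize ψ
  | .or φ ψ => msize φ + msize ψ
  | .dia φ => msize φ + 1
  | .box φ => msize φ + 1

/-- The connective size `cs(φ)`: the number of binary connectives `∧`, `∨` in `φ`. -/
def csize {Φ : Type} : MLFormula Φ → ℕ
  | .pos _ => 0
  | .neg _ => 0
  | .and φ ψ => csize φ + csize ψ + 1
  | .or φ ψ => csize φ + csize ψ + 1
  | .dia φ => csize φ
  | .box φ => csize φ

/-- A formula `φ` separates the sets `A` and `B` of pointed models if `φ` is true in
every model of `A` and false in every model of `B`. -/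
def Separates {Φ : Type} (φ : MLFormula Φ) (A B : Set (PointedModel.{u} Φ)) : Prop :=
  (∀ P ∈ A, MLSat P.M P.w φ) ∧ (∀ P ∈ B, ¬ MLSat P.M P.w φ)

/-- The set of successors of a pointed model: the same model pointed at any `R`-successor
of the distinguished world. -/
def succs {Φ : Type} (P : PointedModel.{u} Φ) : Set (PointedModel.{u} Φ) :=
  {Q | ∃ x : P.M.W, P.M.R P.w x ∧ Q = ⟨P.M, x⟩}

/-- `◇A`: all successors of all models in `A`. -/
def diaSet {Φ : Type} (A : Set (PointedModel.{u} Φ)) : Set (PointedModel.{u} Φ) :=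
  ⋃ P ∈ A, succs P

/-- `DWins m k A B` says that the player D (duplicator) has a winning strategy in the
formula size game `FS_{m,k}(A, B)`: S does not win the current position (no literal
separates `A` and `B`), for every splitting move of S, D can choose a continuation that D
wins, and D wins the position resulting from every successor move of S. -/
def DWins {Φ : Type} (m k : ℕ) (A B : Set (PointedModel.{u} Φ)) : Prop :=
  (¬ ∃ φ : MLFormula Φ, IsLiteral φ ∧ Separates φ A B) ∧
  (∀ m₁ m₂ k₁ k₂ (A₁ A₂ : Set (PointedModel.{u} Φ)), m₁ + m₂ = m → k₁ + k₂ + 1 = k →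
      A₁ ∪ A₂ = A → DWins m₁ k₁ A₁ B ∨ DWins m₂ k₂ A₂ B) ∧
  (∀ m₁ m₂ k₁ k₂ (B₁ B₂ : Set (PointedModel.{u} Φ)), m₁ + m₂ = m → k₁ + k₂ + 1 = k →
      B₁ ∪ B₂ = B → DWins m₁ k₁ A B₁ ∨ DWins m₂ k₂ A B₂) ∧
  (∀ m' (f : PointedModel.{u} Φ → PointedModel.{u} Φ), m = m' + 1 →
      (∀ P ∈ A, f P ∈ succs P) → DWins m' k (f '' A) (diaSet B)) ∧
  (∀ m' (g : PointedModel.{u} Φ → PointedModel.{u} Φ), m = m' + 1 →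
      (∀ P ∈ B, g P ∈ succs P) → DWins m' k (diaSet A) (g '' B))
termination_by m + k
decreasing_by all_goals omega

/-- `n`-bisimilarity of pointed models: there are relations `Zₙ ⊆ … ⊆ Z₀` such that the
distinguished pair is in `Zₙ`, `Z₀` relates only propositionally equivalent points, and the
back-and-forth conditions hold for each `0 ≤ i ≤ n-1`. -/
def NBisim {Φ : Type} (n : ℕ) (M : KripkeModel.{u} Φ) (w : M.W)
    (N : KripkeModel.{v} Φ) (x : N.W) : Prop :=
  ∃ Z : ℕ → M.W → N.W → Prop,
    (∀ i, i < n → ∀ a b, Z (i + 1) a b → Z i a b) ∧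
    Z n w x ∧
    (∀ a b, Z 0 a b → ∀ p, M.V p a ↔ N.V p b) ∧
    (∀ i, i < n → ∀ a b, Z (i + 1) a b → ∀ c, M.R a c → ∃ d, N.R b d ∧ Z i c d) ∧
    (∀ i, i < n → ∀ a b, Z (i + 1) a b → ∀ d, N.R b d → ∃ c, M.R a c ∧ Z i c d)

lemma zmono {α : Sort*} {β : Sort*} {Z : ℕ → α → β → Prop} {n : ℕ}
    (hm : ∀ i, i < n → ∀ a b, Z (i + 1) a b → Z i a b) :
    ∀ i j, i ≤ j → j ≤ n → ∀ a b, Z j a b → Z i a b := by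
  intro i j hij hjn a b h
  induction j with
  | zero => obtain rfl := Nat.le_zero.mp hij; exact h
  | succ j ihj =>
    rcases Nat.eq_or_lt_of_le hij with rfl | hlt
    · exact h
    · exact ihj (by omega) (by omega) (hm j (by omega) a b h)

lemma nbisim_mono {Φ : Type} {M : KripkeModel.{u} Φ} {w : M.W}
    {N : KripkeModel.{v} Φ} {x : N.W} {n n' : ℕ} (hn : n' ≤ n)
    (h : NBisim n M w N x) : NBisim n' M w N x := by
  obtain ⟨Z, hmono, hZ, h0, hf, hb⟩ := h
  exact ⟨Z, fun i hi => hmono i (by omega), zmono hmono n' n hn le_rfl _ _ hZ, h0,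
    fun i hi => hf i (by omega), fun i hi => hb i (by omega)⟩

lemma no_literal_sep {Φ : Type} {A B : Set (PointedModel.{u} Φ)} {m : ℕ}
    (h : ∃ P ∈ A, ∃ Q ∈ B, NBisim m P.M P.w Q.M Q.w) :
    ¬ ∃ φ : MLFormula Φ, IsLiteral φ ∧ Separates φ A B := by
  obtain ⟨P, hP, Q, hQ, Z, hmono, hZ, h0, _, _⟩ := h
  have hprop : ∀ p, P.M.V p P.w ↔ Q.M.V p Q.w :=
    h0 _ _ (zmono hmono 0 m (Nat.zero_le _) le_rfl _ _ hZ)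
  rintro ⟨φ, hlit, hs1, hs2⟩
  cases φ with
  | pos p => exact hs2 Q hQ ((hprop p).mp (hs1 P hP))
  | neg p => exact hs2 Q hQ (fun hv => (hs1 P hP) ((hprop p).mpr hv))
  | and φ ψ => exact hlit
  | or φ ψ => exact hlit
  | dia φ => exact hlit
  | box φ => exact hlit

lemma dwins_aux {Φ : Type} : ∀ s m k (A B : Set (PointedModel.{u} Φ)), m + k ≤ s →
    (∃ P ∈ A, ∃ Q ∈ B, NBisim m P.M P.w Q.M Q.w) → DWins m k A B := by
  intro s
  induction s with
  | zero =>
    intro m k A B hs h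
    rw [DWins]
    refine ⟨no_literal_sep h, ?_, ?_, ?_, ?_⟩
    · intro m₁ m₂ k₁ k₂ A₁ A₂ hm hk hA; omega
    · intro m₁ m₂ k₁ k₂ B₁ B₂ hm hk hB; omega
    · intro m' f hm hf; omega
    · intro m' g hm hg; omega
  | succ s ih =>
    intro m k A B hs h
    rw [DWins]
    refine ⟨no_literal_sep h, ?_, ?_, ?_, ?_⟩
    · intro m₁ m₂ k₁ k₂ A₁ A₂ hm hk hA
      obtain ⟨P, hP, Q, hQ, hbis⟩ := h
      rw [← hA] at hP
      rcases hP with hP1 | hP2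
      · exact Or.inl (ih m₁ k₁ A₁ B (by omega)
          ⟨P, hP1, Q, hQ, nbisim_mono (by omega) hbis⟩)
      · exact Or.inr (ih m₂ k₂ A₂ B (by omega)
          ⟨P, hP2, Q, hQ, nbisim_mono (by omega) hbis⟩)
    · intro m₁ m₂ k₁ k₂ B₁ B₂ hm hk hB
      obtain ⟨P, hP, Q, hQ, hbis⟩ := h
      rw [← hB] at hQ
      rcases hQ with hQ1 | hQ2
      · exact Or.inl (ih m₁ k₁ A B₁ (by omega)
          ⟨P, hP, Q, hQ1, nbisim_mono (by omega) hbis⟩)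
      · exact Or.inr (ih m₂ k₂ A B₂ (by omega)
          ⟨P, hP, Q, hQ2, nbisim_mono (by omega) hbis⟩)
    · intro m' f hm hf
      obtain ⟨P, hP, Q, hQ, Z, hmono, hZ, h0, hforth, hback⟩ := h
      obtain ⟨c, hRc, hfc⟩ := hf P hP
      subst hm
      obtain ⟨d, hRd, hZd⟩ := hforth m' (by omega) P.w Q.w hZ c hRc
      refine ih m' k (f '' A) (diaSet B) (by omega)
        ⟨f P, Set.mem_image_of_mem f hP, ⟨Q.M, d⟩, ?_, ?_⟩
      · exact Set.mem_biUnion hQ ⟨d, hRd, rfl⟩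
      · rw [hfc]
        exact ⟨Z, fun i hi => hmono i (by omega), hZd, h0,
          fun i hi => hforth i (by omega), fun i hi => hback i (by omega)⟩
    · intro m' g hm hg
      obtain ⟨P, hP, Q, hQ, Z, hmono, hZ, h0, hforth, hback⟩ := h
      obtain ⟨d, hRd, hgd⟩ := hg Q hQ
      subst hm
      obtain ⟨c, hRc, hZc⟩ := hback m' (by omega) P.w Q.w hZ d hRd
      refine ih m' k (diaSet A) (g '' B) (by omega)
        ⟨⟨P.M, c⟩, ?_, g Q, Set.mem_image_of_mem g hQ, ?_⟩
      · exact Set.mem_biUnion hP ⟨c, hRc, rfl⟩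
      · rw [hgd]
        exact ⟨Z, fun i hi => hmono i (by omega), hZc, h0,
          fun i hi => hforth i (by omega), fun i hi => hback i (by omega)⟩

/-- **Theorem 4 (Hella–Vilander).**  If some pointed model in `A` is `m`-bisimilar to some
pointed model in `B`, then D has a winning strategy in the formula size game
`FS_{m,k}(A, B)`. -/
theorem dwins_of_nbisim {Φ : Type} (A B : Set (PointedModel.{u} Φ)) (m k : ℕ)
    (h : ∃ P ∈ A, ∃ Q ∈ B, NBisim m P.M P.w Q.M Q.w) :
    DWins m k A B := by
  exact dwins_aux (m + k) m k A B le_rfl h
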